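/- arXiv:2110.08178 — 3 statements merged into one kernel-verified Lean document; each statement's English description precedes it below -/
import Mathlib

section
/- Let G be a commutative group with a conical scalar action and x ∘_a y = x · a(x⁻¹ · y). Then the right distributivity law (COLIN) holds: (x ∘_a y) ∘_b z = (x ∘_b z) ∘_a (y ∘_b z) for all x,y,z ∈ G and a,b > 0. -/
/-- (COLIN) holds in commutative conical groups. -/
theorem conical_COLIN (G : Type*) [CommGroup G]
    (s : ℝ → G → G)
    (hcomp : ∀ a b : ℝ, 0 < a → 0 < b → ∀ x : G, s a (s b x) = s (a * b) x)
    (hone : ∀ x : G, s 1 x = x)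
    (hmul : ∀ a : ℝ, 0 < a → ∀ x y : G, s a (x * y) = s a x * s a y)
    (hinv : ∀ a : ℝ, 0 < a → ∀ x : G, s a x⁻¹ = (s a x)⁻¹)
    (hneut : ∀ a : ℝ, 0 < a → s a (1 : G) = 1) :
    ∀ a b : ℝ, 0 < a → 0 < b → ∀ x y z : G,
      (x * s a (x⁻¹ * y)) * s b ((x * s a (x⁻¹ * y))⁻¹ * z) =
      (x * s b (x⁻¹ * z)) * s a ((x * s b (x⁻¹ * z))⁻¹ * (y * s b (y⁻¹ * z))) := by
  intro a b ha hb x y z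
  simp only [mul_inv_rev, hmul a ha, hmul b hb, hinv a ha, hinv b hb,
    hcomp a b ha hb, hcomp b a hb ha, inv_inv, mul_comm b a]
  simp [mul_comm, mul_left_comm, mul_assoc]
end

section
/- Let G be a group with a conical scalar action such that for some a ∈ (0,∞), a ≠ 1, the map x ↦ x · a(x⁻¹) is surjective. If the associated operations x ∘_a y = x · a(x⁻¹ y) satisfy (COLIN) ((x ∘_a y) ∘_b z = (x ∘_b z) ∘_a (y ∘_b z) for all x,y,z,a,b), then G is commutative. -/
/-- If a conical group with a surjective map x ↦ x · a(x⁻¹) (for some a ≠ 1)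
satisfies (COLIN), then the group is commutative. -/
theorem conical_COLIN_implies_comm (G : Type*) [Group G]
    (s : ℝ → G → G)
    (hcomp : ∀ a b : ℝ, 0 < a → 0 < b → ∀ x : G, s a (s b x) = s (a * b) x)
    (hone : ∀ x : G, s 1 x = x)
    (hmul : ∀ a : ℝ, 0 < a → ∀ x y : G, s a (x * y) = s a x * s a y)
    (hinv : ∀ a : ℝ, 0 < a → ∀ x : G, s a x⁻¹ = (s a x)⁻¹)
    (hneut : ∀ a : ℝ, 0 < a → s a (1 : G) = 1)
    (a : ℝ) (ha : 0 < a) (hane : a ≠ 1)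
    (hsurj : Function.Surjective fun x : G => x * s a x⁻¹)
    (hcolin : ∀ a b : ℝ, 0 < a → 0 < b → ∀ x y z : G,
      (x * s a (x⁻¹ * y)) * s b ((x * s a (x⁻¹ * y))⁻¹ * z) =
      (x * s b (x⁻¹ * z)) * s a ((x * s b (x⁻¹ * z))⁻¹ * (y * s b (y⁻¹ * z)))) :
    ∀ x y : G, x * y = y * x := by
  have ha' : (0:ℝ) < a⁻¹ := by positivity
  have hsa : ∀ w : G, s a (s a⁻¹ w) = w := by
    intro w
    rw [hcomp a a⁻¹ ha ha', mul_inv_cancel₀ (ne_of_gt ha), hone]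
  have main : ∀ u v : G, u * (s a u)⁻¹ * v = v * (s a v)⁻¹ * (u * (s a u)⁻¹) * s a v := by
    intro u v
    have h := hcolin a a ha ha 1 (s a⁻¹ u) (s a⁻¹ v)
    simp only [inv_one, one_mul, hmul a ha, hinv a ha, hsa] at h
    simp only [mul_assoc] at h ⊢
    exact h
  -- every element of the form v * s a v⁻¹ is central
  have central : ∀ v g : G, g * (v * (s a v)⁻¹) = (v * (s a v)⁻¹) * g := by
    intro v g
    obtain ⟨u, hu⟩ := hsurj g
    simp only [hinv a ha] at hu
    have h2 : g * v = v * (s a v)⁻¹ * g * s a v := by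
      rw [← hu]; exact main u v
    calc g * (v * (s a v)⁻¹) = (g * v) * (s a v)⁻¹ := by group
      _ = (v * (s a v)⁻¹ * g * s a v) * (s a v)⁻¹ := by rw [h2]
      _ = (v * (s a v)⁻¹) * g := by group
  intro x y
  obtain ⟨v, hv⟩ := hsurj y
  simp only [hinv a ha] at hv
  rw [← hv, central]
end

section
/- Let G be a group with a conical scalar action such that for some a ≠ 1 the map x ↦ x · a(x⁻¹) is surjective. If the operations x ∘_a y = x · a(x⁻¹ y) satisfy the medial law (SHUFFLE) ((x ∘_a y) ∘_b (u ∘_a v) = (x ∘_b u) ∘_a (y ∘_b v)), then G is commutative. -/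
/-- If a conical group with a surjective map x ↦ x · a(x⁻¹) (for some a ≠ 1)
satisfies (SHUFFLE), then the group is commutative. -/
theorem conical_SHUFFLE_implies_comm (G : Type*) [Group G]
    (s : ℝ → G → G)
    (hcomp : ∀ a b : ℝ, 0 < a → 0 < b → ∀ x : G, s a (s b x) = s (a * b) x)
    (hone : ∀ x : G, s 1 x = x)
    (hmul : ∀ a : ℝ, 0 < a → ∀ x y : G, s a (x * y) = s a x * s a y)
    (hinv : ∀ a : ℝ, 0 < a → ∀ x : G, s a x⁻¹ = (s a x)⁻¹)
    (hneut : ∀ a : ℝ, 0 < a → s a (1 : G) = 1)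
    (a : ℝ) (ha : 0 < a) (hane : a ≠ 1)
    (hsurj : Function.Surjective fun x : G => x * s a x⁻¹)
    (hshuffle : ∀ a b : ℝ, 0 < a → 0 < b → ∀ x y u v : G,
      (x * s a (x⁻¹ * y)) * s b ((x * s a (x⁻¹ * y))⁻¹ * (u * s a (u⁻¹ * v))) =
      (x * s b (x⁻¹ * u)) * s a ((x * s b (x⁻¹ * u))⁻¹ * (y * s b (y⁻¹ * v)))) :
    ∀ x y : G, x * y = y * x := by
  -- The map A : g ↦ s a (g * s a g⁻¹) is surjective.
  have hAsurj : Function.Surjective (fun g : G => s a (g * s a g⁻¹)) := by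
    intro z
    obtain ⟨w, hw⟩ := hsurj (s a⁻¹ z)
    refine ⟨w, ?_⟩
    simp only at hw ⊢
    rw [hw, hcomp a a⁻¹ ha (by positivity), mul_inv_cancel₀ (ne_of_gt ha), hone]
  -- Any two values of A commute.
  have key : ∀ g h : G, s a (g * s a g⁻¹) * s a (h * s a h⁻¹)
      = s a (h * s a h⁻¹) * s a (g * s a g⁻¹) := by
    intro g h
    have H := hshuffle a a ha ha 1 g h 1
    simp only [one_mul, inv_one, mul_one] at H
    rw [hmul a ha ((s a g)⁻¹) (h * s a h⁻¹), hmul a ha ((s a h)⁻¹) (g * s a g⁻¹)] at H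
    rw [hmul a ha g (s a g⁻¹), hmul a ha h (s a h⁻¹)]
    rw [hinv a ha g, hinv a ha h] at H ⊢
    rw [hmul a ha h ((s a h)⁻¹), hmul a ha g ((s a g)⁻¹)] at H
    simp only [mul_assoc] at H ⊢
    exact H
  intro x y
  obtain ⟨p, hp⟩ := hAsurj x
  obtain ⟨q, hq⟩ := hAsurj y
  simp only at hp hq
  rw [← hp, ← hq, key]
end
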